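/- arXiv:math/0501145 — 4 statements merged into one kernel-verified Lean document; each statement's English description precedes it below -/
import Mathlib

section
/- Let H be a complex Hilbert space and S : H → H an isometry, and let (Ĥ₁, ι₁, Ŝ₁) and (Ĥ₂, ι₂, Ŝ₂) be two minimal unitary dilations of (H, S). Then there exists a unitary operator Φ : Ĥ₁ → Ĥ₂ such that Φ ∘ ι₁ = ι₂ and Φ ∘ Ŝ₁ = Ŝ₂ ∘ Φ. -/
/-!
A minimal unitary dilation is densely spanned by the vectors `U⁻ⁿ (ι x)`, whose Gram matrix
`⟪U⁻ⁿ ι x, U⁻ᵐ ι y⟫ = ⟪Sᵐ⁻ⁿ x, Sⁿ⁻ᵐ y⟫` depends only on `(H, S)`. Two densely spanning families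
in Hilbert spaces with the same Gram matrix are matched by a unitary, and this unitary
intertwines the `U⁻¹` because `U⁻¹` only shifts the index `n`.
-/

open Function Submodule Set Finsupp

section GramMatrix

variable {𝕜 ι E F : Type*} [RCLike 𝕜] [NormedAddCommGroup E] [InnerProductSpace 𝕜 E]
  [NormedAddCommGroup F] [InnerProductSpace 𝕜 F] {v : ι → E} {w : ι → F}

theorem norm_linearCombination_eq_of_inner_eq
    (h : ∀ i j, inner 𝕜 (v i) (v j) = inner 𝕜 (w i) (w j)) (c : ι →₀ 𝕜) :
    ‖linearCombination 𝕜 w c‖ = ‖linearCombination 𝕜 v c‖ := by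
  simp only [@norm_eq_sqrt_re_inner 𝕜, linearCombination_apply, Finsupp.sum, sum_inner, inner_sum,
    inner_smul_left, inner_smul_right, h]

theorem denseRange_linearCombination_iff :
    DenseRange (linearCombination 𝕜 v) ↔ Dense (span 𝕜 (range v) : Set E) := by
  rw [DenseRange, ← LinearMap.coe_range, range_linearCombination]

theorem exists_linearIsometryEquiv_apply_eq_of_inner_eq [CompleteSpace E] [CompleteSpace F]
    (hv : Dense (span 𝕜 (range v) : Set E)) (hw : Dense (span 𝕜 (range w) : Set F))
    (h : ∀ i j, inner 𝕜 (v i) (v j) = inner 𝕜 (w i) (w j)) :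
    ∃ Φ : E ≃ₗᵢ[𝕜] F, ∀ i, Φ (v i) = w i := by
  have hv' := denseRange_linearCombination_iff.2 hv
  have hw' := denseRange_linearCombination_iff.2 hw
  have hnorm := norm_linearCombination_eq_of_inner_eq h
  refine ⟨(LinearEquiv.refl 𝕜 (ι →₀ 𝕜)).extendOfIsometry _ _ hv' hw' hnorm, fun i => ?_⟩
  simpa using (LinearEquiv.refl 𝕜 (ι →₀ 𝕜)).extendOfIsometry_eq _ _ hv' hw' hnorm (single i 1)

end GramMatrix

section BackwardOrbit

variable {𝕜 H E : Type*} [RCLike 𝕜] [NormedAddCommGroup H] [InnerProductSpace 𝕜 H]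
  [NormedAddCommGroup E] [InnerProductSpace 𝕜 E] (U : E ≃ₗᵢ[𝕜] E) (ι : H →ₗᵢ[𝕜] E)

def backwardOrbit (p : ℕ × H) : E := U.symm^[p.1] (ι p.2)

theorem range_backwardOrbit : range (backwardOrbit U ι) = ⋃ n : ℕ, U.symm^[n] '' range ι := by
  ext y
  simp [backwardOrbit]

theorem backwardOrbit_succ (n : ℕ) (x : H) :
    backwardOrbit U ι (n + 1, x) = U.symm (backwardOrbit U ι (n, x)) :=
  iterate_succ_apply' _ _ _

variable {U ι} {S : H → H}

theorem backwardOrbit_add_iterate (hS : Semiconj ι S U) (n k : ℕ) (x : H) :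
    backwardOrbit U ι (n + k, S^[k] x) = backwardOrbit U ι (n, x) := by
  rw [backwardOrbit, (hS.iterate_right k).eq, iterate_add_apply,
    LeftInverse.iterate U.symm_apply_apply k, backwardOrbit]

-- Truncated subtraction: at most one of `m - n`, `n - m` is nonzero.
theorem inner_backwardOrbit (hS : Semiconj ι S U) (n m : ℕ) (x y : H) :
    inner 𝕜 (backwardOrbit U ι (n, x)) (backwardOrbit U ι (m, y)) =
      inner 𝕜 (S^[m - n] x) (S^[n - m] y) := by
  rw [← backwardOrbit_add_iterate hS n (m - n), ← backwardOrbit_add_iterate hS m (n - m),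
    show m + (n - m) = n + (m - n) by omega]
  have hiter := (U.symm.toLinearIsometry ^ (n + (m - n))).inner_map_map
  simp only [LinearIsometry.coe_pow, LinearIsometryEquiv.coe_toLinearIsometry] at hiter
  rw [backwardOrbit, backwardOrbit, hiter, ι.inner_map_map]

end BackwardOrbit

theorem minimal_unitary_dilation_unique_general
    {H : Type} [NormedAddCommGroup H] [InnerProductSpace ℂ H]
    (S : H →ₗᵢ[ℂ] H)
    {H₁ : Type} [NormedAddCommGroup H₁] [InnerProductSpace ℂ H₁] [CompleteSpace H₁]
    {H₂ : Type} [NormedAddCommGroup H₂] [InnerProductSpace ℂ H₂] [CompleteSpace H₂]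
    (ι₁ : H →ₗᵢ[ℂ] H₁) (S₁ : H₁ ≃ₗᵢ[ℂ] H₁)
    (ι₂ : H →ₗᵢ[ℂ] H₂) (S₂ : H₂ ≃ₗᵢ[ℂ] H₂)
    (hcov₁ : ∀ x : H, S₁ (ι₁ x) = ι₁ (S x))
    (hdense₁ : Dense (⋃ n : ℕ, (S₁.symm)^[n] '' Set.range ι₁))
    (hcov₂ : ∀ x : H, S₂ (ι₂ x) = ι₂ (S x))
    (hdense₂ : Dense (⋃ n : ℕ, (S₂.symm)^[n] '' Set.range ι₂)) :
    ∃ Φ : H₁ ≃ₗᵢ[ℂ] H₂,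
      (∀ x : H, Φ (ι₁ x) = ι₂ x) ∧ (∀ y : H₁, Φ (S₁ y) = S₂ (Φ y)) := by
  have hS₁ : Semiconj ι₁ S S₁ := fun x => (hcov₁ x).symm
  have hS₂ : Semiconj ι₂ S S₂ := fun x => (hcov₂ x).symm
  rw [← range_backwardOrbit] at hdense₁ hdense₂
  obtain ⟨Φ, hΦ⟩ := exists_linearIsometryEquiv_apply_eq_of_inner_eq
    (hdense₁.mono subset_span) (hdense₂.mono subset_span) fun p q => by
      rw [inner_backwardOrbit hS₁, inner_backwardOrbit hS₂]
  have hΦ_symm : Φ ∘ S₁.symm = S₂.symm ∘ Φ := by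
    refine Continuous.ext_on hdense₁ (by fun_prop) (by fun_prop) ?_
    rintro _ ⟨⟨n, x⟩, rfl⟩
    simp only [comp_apply, ← backwardOrbit_succ, hΦ]
  refine ⟨Φ, fun x => hΦ (0, x), fun y => ?_⟩
  simpa using congrArg S₂ (congrFun hΦ_symm (S₁ y)).symm

/-- **Uniqueness of the minimal unitary dilation.**
Let `H` be a complex Hilbert space, `S : H → H` an isometry, and let
`(H₁, ι₁, S₁)` and `(H₂, ι₂, S₂)` be two minimal unitary dilations of `(H, S)`,
i.e. `ιⱼ` is a linear isometric embedding, `Sⱼ` is unitary, `Sⱼ ∘ ιⱼ = ιⱼ ∘ S`, and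
`⋃_{n ≥ 0} Sⱼ⁻ⁿ(ιⱼ(H))` is dense.  Then there is a unitary `Φ : H₁ → H₂` with
`Φ ∘ ι₁ = ι₂` and `Φ ∘ S₁ = S₂ ∘ Φ`. -/
theorem minimal_unitary_dilation_unique
    {H : Type} [NormedAddCommGroup H] [InnerProductSpace ℂ H] [CompleteSpace H]
    (S : H →ₗᵢ[ℂ] H)
    {H₁ : Type} [NormedAddCommGroup H₁] [InnerProductSpace ℂ H₁] [CompleteSpace H₁]
    {H₂ : Type} [NormedAddCommGroup H₂] [InnerProductSpace ℂ H₂] [CompleteSpace H₂]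
    (ι₁ : H →ₗᵢ[ℂ] H₁) (S₁ : H₁ ≃ₗᵢ[ℂ] H₁)
    (ι₂ : H →ₗᵢ[ℂ] H₂) (S₂ : H₂ ≃ₗᵢ[ℂ] H₂)
    (hcov₁ : ∀ x : H, S₁ (ι₁ x) = ι₁ (S x))
    (hdense₁ : Dense (⋃ n : ℕ, (S₁.symm)^[n] '' Set.range ι₁))
    (hcov₂ : ∀ x : H, S₂ (ι₂ x) = ι₂ (S x))
    (hdense₂ : Dense (⋃ n : ℕ, (S₂.symm)^[n] '' Set.range ι₂)) :
    ∃ Φ : H₁ ≃ₗᵢ[ℂ] H₂,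
      (∀ x : H, Φ (ι₁ x) = ι₂ x) ∧ (∀ y : H₁, Φ (S₁ y) = S₂ (Φ y)) :=
  minimal_unitary_dilation_unique_general S ι₁ S₁ ι₂ S₂ hcov₁ hdense₁ hcov₂ hdense₂
end

section
/- Let X, r be as in the context, let W : X → [0,∞) be measurable, let ν be a Borel measure on X satisfying ∫_X R_W f dν = ∫_X f dν for all bounded measurable f (i.e. ν is a left-eigenfunction of the transfer operator, ν R_W = ν), and let h : X → [0,∞) be measurable with R_W h = h pointwise. Then the measure μ with dμ = h dν (μ(E) = ∫_E h dν) is invariant: the pushforward of μ under r equals μ. -/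
open MeasureTheory

/-- The transfer operator `(R_W f)(x) = Σ_{y : r(y) = x} W(y) f(y)` associated with a
finite-to-one map `r` and a weight `W`, acting on complex-valued functions. -/
noncomputable def transferOpC {X : Type} (r : X → X) (W : X → ℝ) (f : X → ℂ) : X → ℂ :=
  fun x => ∑' y : r ⁻¹' {x}, (W y : ℂ) * f y

/-- The transfer operator acting on real-valued functions. -/
noncomputable def transferOp {X : Type} (r : X → X) (W : X → ℝ) (f : X → ℝ) : X → ℝ :=
  fun x => ∑' y : r ⁻¹' {x}, W y * f y

/-!
For a measurable `E`, the function `g = 1_{r⁻¹E} h` satisfies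
`R_W g = 1_E R_W h = 1_E h`, so `ν R_W = ν` applied to `g` reads `μ(r⁻¹E) = μ(E)`.
Since `h` may be unbounded, this is done for the truncations `min h m`, which the eigen-identity
covers, and passed to the limit by monotone convergence; on each finite fiber the truncation is
eventually exact. Integrability of `R_W g`, which the hypothesis on `ν` does not provide, follows
from `∫ R_W (g + c) = ∫ (g + c) ≠ 0` for a large constant `c`.
-/

lemma Monotone.iSup_eq_of_eventually_eq {α : Type*} [CompleteLattice α] {f : ℕ → α} {a : α}
    (hf : Monotone f) (ha : ∀ᶠ n in Filter.atTop, f n = a) : ⨆ n, f n = a := by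
  obtain ⟨N, hN⟩ := ha.exists_forall_of_atTop
  exact le_antisymm (iSup_le fun n => (hf (le_max_left n N)).trans (hN _ (le_max_right n N)).le)
    (le_iSup_of_le N (hN N le_rfl).ge)

namespace transferOp

variable {X : Type} {r : X → X} {W : X → ℝ}

lemma summable_of_finite {x : X} (hx : (r ⁻¹' {x}).Finite) (f : X → ℝ) :
    Summable fun y : r ⁻¹' {x} => W y * f y :=
  haveI := hx.to_subtype
  .of_finite

lemma nonneg (hW : ∀ y, 0 ≤ W y) {f : X → ℝ} (hf : ∀ y, 0 ≤ f y) (x : X) :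
    0 ≤ transferOp r W f x :=
  tsum_nonneg fun y => mul_nonneg (hW y) (hf y)

lemma mono (hfin : ∀ x, (r ⁻¹' {x}).Finite) (hW : ∀ y, 0 ≤ W y) {f g : X → ℝ}
    (hfg : ∀ y, f y ≤ g y) (x : X) : transferOp r W f x ≤ transferOp r W g x :=
  Summable.tsum_le_tsum (fun y => mul_le_mul_of_nonneg_left (hfg y) (hW y))
    (summable_of_finite (hfin x) f) (summable_of_finite (hfin x) g)

lemma add_const (hfin : ∀ x, (r ⁻¹' {x}).Finite) (f : X → ℝ) (c : ℝ) :
    transferOp r W (fun y => f y + c) = transferOp r W f + transferOp r W fun _ => c := by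
  funext x
  simp only [transferOp, Pi.add_apply, mul_add]
  exact (summable_of_finite (hfin x) f).tsum_add (summable_of_finite (hfin x) fun _ => c)

lemma indicator_preimage (E : Set X) (f : X → ℝ) :
    transferOp r W ((r ⁻¹' E).indicator f) = E.indicator (transferOp r W f) := by
  ext x
  by_cases hx : x ∈ E
  · rw [Set.indicator_of_mem hx]
    refine tsum_congr fun y => ?_
    have hy : r y = x := y.2
    rw [Set.indicator_of_mem (show (y : X) ∈ r ⁻¹' E by rwa [Set.mem_preimage, hy])]
  · rw [Set.indicator_of_notMem hx]
    refine (tsum_congr fun y => ?_).trans tsum_zero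
    have hy : r y = x := y.2
    rw [Set.indicator_of_notMem (show (y : X) ∉ r ⁻¹' E by rwa [Set.mem_preimage, hy]), mul_zero]

lemma eventually_min_eq {x : X} (hx : (r ⁻¹' {x}).Finite) (f : X → ℝ) :
    ∀ᶠ m : ℕ in Filter.atTop, transferOp r W (fun y => min (f y) m) x = transferOp r W f x := by
  obtain ⟨B, hB⟩ := (hx.image f).bddAbove
  filter_upwards [Filter.eventually_ge_atTop ⌈B⌉₊] with m hm
  refine tsum_congr fun y => ?_
  dsimp only
  rw [min_eq_left ((hB ⟨y, y.2, rfl⟩).trans ((Nat.le_ceil B).trans (by exact_mod_cast hm)))]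

end transferOp

lemma transferOpC_ofReal {X : Type} (r : X → X) (W : X → ℝ) (f : X → ℝ) (x : X) :
    transferOpC r W (fun y => (f y : ℂ)) x = transferOp r W f x := by
  simp only [transferOpC, transferOp, Complex.ofReal_tsum, Complex.ofReal_mul]

section EigenMeasure

variable {X : Type} [MeasurableSpace X] {r : X → X} {W : X → ℝ} {ν : Measure X}

/-- `ν R_W = ν`, tested against bounded measurable real functions. -/
def IsTransferEigenmeasure (r : X → X) (W : X → ℝ) (ν : Measure X) : Prop :=
  ∀ f : X → ℝ, Measurable f → (∃ C, ∀ x, |f x| ≤ C) →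
    ∫ x, transferOp r W f x ∂ν = ∫ x, f x ∂ν

lemma isTransferEigenmeasure_of_transferOpC
    (hν : ∀ f : X → ℂ, Measurable f → (∃ C, ∀ x, ‖f x‖ ≤ C) →
      ∫ x, transferOpC r W f x ∂ν = ∫ x, f x ∂ν) :
    IsTransferEigenmeasure r W ν := by
  rintro f hf ⟨C, hC⟩
  have hνf := hν (fun y => (f y : ℂ)) (Complex.measurable_ofReal.comp hf)
    ⟨C, fun x => by simpa using hC x⟩
  simp only [transferOpC_ofReal] at hνf
  exact_mod_cast hνf

variable [IsFiniteMeasure ν]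

lemma integrable_of_abs_le {f : X → ℝ} (hf : Measurable f) {C : ℝ} (hC : ∀ x, |f x| ≤ C) :
    Integrable f ν :=
  (integrable_const C).mono' hf.aestronglyMeasurable (.of_forall hC)

lemma IsTransferEigenmeasure.integrable_transferOp (hν : IsTransferEigenmeasure r W ν)
    (hfin : ∀ x, (r ⁻¹' {x}).Finite) {f : X → ℝ} (hf : Measurable f) {C : ℝ}
    (hC : ∀ x, |f x| ≤ C) : Integrable (transferOp r W f) ν := by
  rcases eq_zero_or_neZero ν with rfl | _
  · exact integrable_zero_measure
  set c := |C| + 1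
  have hfc : ∀ x, 1 ≤ f x + c := fun x => by
    linarith [neg_abs_le (f x), hC x, le_abs_self C]
  have hshift : Integrable (transferOp r W fun y => f y + c) ν := by
    refine .of_integral_ne_zero ?_
    have hbdd : ∀ x, |f x + c| ≤ C + c := fun x =>
      (abs_add_le _ _).trans (add_le_add (hC x) (abs_of_pos (by positivity)).le)
    rw [hν _ (hf.add_const _) ⟨_, hbdd⟩]
    refine (lt_of_lt_of_le ?_ (integral_mono (integrable_const 1)
      (integrable_of_abs_le (hf.add_const _) hbdd) hfc)).ne'
    simp
  have hconst : Integrable (transferOp r W fun _ => c) ν := by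
    refine .of_integral_ne_zero ?_
    rw [hν _ measurable_const ⟨|c|, fun _ => le_rfl⟩, integral_const]
    exact smul_ne_zero measureReal_univ_pos.ne' (by positivity)
  simpa [transferOp.add_const hfin] using hshift.sub hconst

lemma IsTransferEigenmeasure.lintegral_ofReal_transferOp_of_abs_le
    (hν : IsTransferEigenmeasure r W ν) (hfin : ∀ x, (r ⁻¹' {x}).Finite) (hW : ∀ y, 0 ≤ W y)
    {f : X → ℝ} (hf : Measurable f) (hf0 : ∀ x, 0 ≤ f x) {C : ℝ} (hC : ∀ x, |f x| ≤ C) :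
    ∫⁻ x, ENNReal.ofReal (transferOp r W f x) ∂ν = ∫⁻ x, ENNReal.ofReal (f x) ∂ν := by
  rw [← ofReal_integral_eq_lintegral_ofReal (hν.integrable_transferOp hfin hf hC)
      (.of_forall (transferOp.nonneg hW hf0)),
    ← ofReal_integral_eq_lintegral_ofReal (integrable_of_abs_le hf hC) (.of_forall hf0),
    hν f hf ⟨C, hC⟩]

lemma IsTransferEigenmeasure.lintegral_ofReal_transferOp
    (hν : IsTransferEigenmeasure r W ν) (hfin : ∀ x, (r ⁻¹' {x}).Finite) (hW : ∀ y, 0 ≤ W y)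
    {f : X → ℝ} (hf : Measurable f) (hf0 : ∀ x, 0 ≤ f x) :
    ∫⁻ x, ENNReal.ofReal (transferOp r W f x) ∂ν = ∫⁻ x, ENNReal.ofReal (f x) ∂ν := by
  set F : ℕ → X → ℝ := fun m y => min (f y) m
  have hF_meas (m : ℕ) : Measurable (F m) := hf.min measurable_const
  have hF_abs (m : ℕ) (x : X) : |F m x| ≤ m := by
    rw [abs_of_nonneg (le_min (hf0 x) m.cast_nonneg)]
    exact min_le_right _ _
  have hF_mono (x : X) : Monotone fun m => F m x := fun m k hmk =>
    min_le_min le_rfl (by exact_mod_cast hmk)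
  have hRF_mono (x : X) : Monotone fun m => ENNReal.ofReal (transferOp r W (F m) x) :=
    fun m k hmk => ENNReal.ofReal_le_ofReal (transferOp.mono hfin hW (fun y => hF_mono y hmk) x)
  have hRF_lim (x : X) : ⨆ m, ENNReal.ofReal (transferOp r W (F m) x) =
      ENNReal.ofReal (transferOp r W f x) :=
    (hRF_mono x).iSup_eq_of_eventually_eq
      ((transferOp.eventually_min_eq (hfin x) f).mono fun m hm => by rw [hm])
  have hF_lim (x : X) : ⨆ m, ENNReal.ofReal (F m x) = ENNReal.ofReal (f x) :=
    Monotone.iSup_eq_of_eventually_eq (fun m k hmk => ENNReal.ofReal_le_ofReal (hF_mono x hmk))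
      ((Filter.eventually_ge_atTop ⌈f x⌉₊).mono fun m hm =>
        by rw [show F m x = f x from min_eq_left ((Nat.le_ceil _).trans (by exact_mod_cast hm))])
  calc ∫⁻ x, ENNReal.ofReal (transferOp r W f x) ∂ν
      = ∫⁻ x, ⨆ m, ENNReal.ofReal (transferOp r W (F m) x) ∂ν := by simp only [hRF_lim]
    _ = ⨆ m, ∫⁻ x, ENNReal.ofReal (transferOp r W (F m) x) ∂ν :=
      lintegral_iSup' (fun m => (hν.integrable_transferOp hfin (hF_meas m)
        (hF_abs m)).aemeasurable.ennreal_ofReal) (.of_forall hRF_mono)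
    _ = ⨆ m, ∫⁻ x, ENNReal.ofReal (F m x) ∂ν := by
      simp only [hν.lintegral_ofReal_transferOp_of_abs_le hfin hW (hF_meas _)
        (fun x => le_min (hf0 x) (Nat.cast_nonneg _)) (hF_abs _)]
    _ = ∫⁻ x, ⨆ m, ENNReal.ofReal (F m x) ∂ν :=
      (lintegral_iSup (fun m => (hF_meas m).ennreal_ofReal)
        fun m k hmk x => ENNReal.ofReal_le_ofReal (hF_mono x hmk)).symm
    _ = ∫⁻ x, ENNReal.ofReal (f x) ∂ν := by simp only [hF_lim]

end EigenMeasure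

theorem eigenmeasure_withDensity_invariant_general
    {X : Type} [MeasurableSpace X]
    (r : X → X) (hr_meas : Measurable r)
    (hfib : ∀ x : X, (r ⁻¹' {x}).Finite ∧ (r ⁻¹' {x}).Nonempty)
    (W : X → ℝ) (hW_nonneg : ∀ x, 0 ≤ W x)
    (ν : Measure X) [IsFiniteMeasure ν]
    (hν : ∀ f : X → ℂ, Measurable f → (∃ C, ∀ x, ‖f x‖ ≤ C) →
      ∫ x, transferOpC r W f x ∂ν = ∫ x, f x ∂ν)
    (h : X → ℝ) (hh_meas : Measurable h) (hh_nonneg : ∀ x, 0 ≤ h x)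
    (hh_eig : ∀ x, transferOp r W h x = h x) :
    Measure.map r (ν.withDensity fun x => ENNReal.ofReal (h x))
      = ν.withDensity fun x => ENNReal.ofReal (h x) := by
  have hfin (x : X) : (r ⁻¹' {x}).Finite := (hfib x).1
  have hind (s : Set X) : s.indicator (fun x => ENNReal.ofReal (h x)) =
      fun x => ENNReal.ofReal (s.indicator h x) :=
    Set.indicator_comp_of_zero ENNReal.ofReal_zero
  ext E hE
  have key := (isTransferEigenmeasure_of_transferOpC hν).lintegral_ofReal_transferOp hfin
    hW_nonneg (hh_meas.indicator (hr_meas hE)) (Set.indicator_nonneg fun y _ => hh_nonneg y)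
  rw [transferOp.indicator_preimage, funext hh_eig] at key
  rw [Measure.map_apply hr_meas hE, withDensity_apply _ (hr_meas hE), withDensity_apply _ hE,
    ← lintegral_indicator (hr_meas hE), ← lintegral_indicator hE, hind, hind, key]

/-- **Eigen-measure times eigenfunction gives an invariant measure.**
Let `X` be a compact metric space with its Borel σ-algebra, `r : X → X` a measurable
surjection with finite nonempty fibers, and `W : X → [0,∞)` measurable.  Let `ν` be a
finite Borel measure with `∫ R_W f dν = ∫ f dν` for all bounded measurable `f`
(i.e. `ν R_W = ν`), and let `h : X → [0,∞)` be measurable with `R_W h = h` pointwise.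
Then the measure `dμ = h dν` is invariant: its pushforward under `r` is itself. -/
theorem eigenmeasure_withDensity_invariant
    {X : Type} [MetricSpace X] [CompactSpace X] [MeasurableSpace X] [BorelSpace X]
    (r : X → X) (hr_meas : Measurable r) (hr_surj : Function.Surjective r)
    (hfib : ∀ x : X, (r ⁻¹' {x}).Finite ∧ (r ⁻¹' {x}).Nonempty)
    (W : X → ℝ) (hW_meas : Measurable W) (hW_nonneg : ∀ x, 0 ≤ W x)
    (ν : Measure X) [IsFiniteMeasure ν]
    (hν : ∀ f : X → ℂ, Measurable f → (∃ C, ∀ x, ‖f x‖ ≤ C) →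
      ∫ x, transferOpC r W f x ∂ν = ∫ x, f x ∂ν)
    (h : X → ℝ) (hh_meas : Measurable h) (hh_nonneg : ∀ x, 0 ≤ h x)
    (hh_eig : ∀ x, transferOp r W h x = h x) :
    Measure.map r (ν.withDensity fun x => ENNReal.ofReal (h x))
      = ν.withDensity fun x => ENNReal.ofReal (h x) :=
  eigenmeasure_withDensity_invariant_general r hr_meas hfib W hW_nonneg ν hν h hh_meas hh_nonneg
    hh_eig
end

section
/- Let X, r be as in the context, let μ be a strongly invariant Borel probability measure on X, let m₀ ∈ L^∞(X, μ), and let h : X → [0,∞) be measurable with h ∈ L¹(X, μ). Then the operator S_{m₀} defined by (S_{m₀}f)(x) = m₀(x) f(r(x)) is an isometry on L²(X, h dμ) (i.e. ∫_X |m₀(x)|² |f(r(x))|² h(x) dμ(x) = ∫_X |f|² h dμ for all f ∈ L²(X, h dμ)) if and only if R_{m₀} h = h μ-almost everywhere, where R_{m₀} := R_W with weight W(x) = |m₀(x)|² / #r⁻¹(r(x)). -/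
open MeasureTheory

open ENNReal

section SmAux

variable {X : Type} [MeasurableSpace X]

private lemma sm_npos (r : X → X)
    (hfib : ∀ x : X, (r ⁻¹' {x}).Finite ∧ (r ⁻¹' {x}).Nonempty) (x : X) :
    0 < Nat.card (r ⁻¹' {x}) := by
  haveI := (hfib x).1.to_subtype
  haveI := (hfib x).2.to_subtype
  exact Nat.card_pos

private lemma sm_key1 (r : X → X)
    (hfib : ∀ x : X, (r ⁻¹' {x}).Finite ∧ (r ⁻¹' {x}).Nonempty)
    (μ : Measure X) [IsProbabilityMeasure μ]
    (hstrong : ∀ f : X → ℂ, Measurable f → (∃ C, ∀ x, ‖f x‖ ≤ C) →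
      ∫ x, f x ∂μ
        = ∫ x, (Nat.card (r ⁻¹' {x}) : ℂ)⁻¹ * ∑' y : r ⁻¹' {x}, f ↑y ∂μ)
    (G : X → ℝ) (hGmeas : Measurable G) (hG0 : ∀ x, 0 ≤ G x)
    (c : ℝ) (hGc : ∀ x, G x ≤ c) :
    Integrable (fun x => (Nat.card (r ⁻¹' {x}) : ℝ)⁻¹ * ∑' y : r ⁻¹' {x}, G ↑y) μ ∧
      ∫ x, (Nat.card (r ⁻¹' {x}) : ℝ)⁻¹ * ∑' y : r ⁻¹' {x}, G ↑y ∂μ = ∫ x, G x ∂μ := by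
  set P : X → ℝ := fun x => (Nat.card (r ⁻¹' {x}) : ℝ)⁻¹ * ∑' y : r ⁻¹' {x}, G ↑y with hP
  have hmeas : Measurable fun x => ((G x + 1 : ℝ) : ℂ) :=
    Complex.measurable_ofReal.comp (hGmeas.add measurable_const)
  have hbdd : ∃ C, ∀ x, ‖((G x + 1 : ℝ) : ℂ)‖ ≤ C := by
    refine ⟨c + 1, fun x => ?_⟩
    rw [Complex.norm_real, Real.norm_eq_abs, abs_of_nonneg (by linarith [hG0 x])]
    linarith [hGc x]
  have hpt : ∀ x : X, (Nat.card (r ⁻¹' {x}) : ℂ)⁻¹ * ∑' y : r ⁻¹' {x}, ((G ↑y + 1 : ℝ) : ℂ)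
      = ((P x + 1 : ℝ) : ℂ) := by
    intro x
    haveI := (hfib x).1.fintype
    have hn : ((Nat.card (r ⁻¹' {x}) : ℝ)) ≠ 0 :=
      Nat.cast_ne_zero.2 (sm_npos r hfib x).ne'
    have hcard : (Fintype.card (r ⁻¹' {x}) : ℝ) = (Nat.card (r ⁻¹' {x}) : ℝ) := by
      rw [Nat.card_eq_fintype_card]
    have hs : ∑' y : r ⁻¹' {x}, ((G ↑y + 1 : ℝ) : ℂ)
        = (((∑' y : r ⁻¹' {x}, G ↑y) + (Nat.card (r ⁻¹' {x}) : ℝ) : ℝ) : ℂ) := by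
      rw [tsum_fintype, tsum_fintype]
      push_cast
      rw [Finset.sum_add_distrib]
      simp [Finset.card_univ, hcard]
    have hnC : ((Nat.card (r ⁻¹' {x}) : ℂ)) ≠ 0 :=
      Nat.cast_ne_zero.2 (sm_npos r hfib x).ne'
    have hF : ((Fintype.card ↑(r ⁻¹' {x}) : ℂ)) ≠ 0 := by
      rw [← Nat.card_eq_fintype_card]; exact hnC
    rw [hs, hP]
    push_cast
    field_simp
  have heq := hstrong _ hmeas hbdd
  have heq2 : ∫ x, ((G x + 1 : ℝ) : ℂ) ∂μ = ∫ x, ((P x + 1 : ℝ) : ℂ) ∂μ := by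
    rw [heq]
    exact integral_congr_ae (Filter.Eventually.of_forall hpt)
  have hGint : Integrable G μ :=
    (memLp_top_of_bound hGmeas.aestronglyMeasurable c
      (Filter.Eventually.of_forall fun x => by
        rw [Real.norm_eq_abs, abs_of_nonneg (hG0 x)]; exact hGc x)).integrable le_top
  have hpos : (0:ℝ) < ∫ x, (G x + 1) ∂μ := by
    have h1le : ∫ x, (1:ℝ) ∂μ ≤ ∫ x, (G x + 1) ∂μ :=
      integral_mono (integrable_const 1) (hGint.add (integrable_const 1)) fun x => by
        have := hG0 x; show (1:ℝ) ≤ G x + 1; linarith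
    simp only [integral_const, measure_univ, ENNReal.toReal_one, smul_eq_mul, one_mul, probReal_univ] at h1le
    linarith
  have hio : ∀ u : X → ℝ, ∫ x, ((u x : ℝ) : ℂ) ∂μ = ((∫ x, u x ∂μ : ℝ) : ℂ) :=
    fun u => integral_ofReal
  have hne : ∫ x, ((P x + 1 : ℝ) : ℂ) ∂μ ≠ 0 := by
    rw [← heq2, hio (fun x => G x + 1)]
    exact_mod_cast hpos.ne'
  have hCint : Integrable (fun x => ((P x + 1 : ℝ) : ℂ)) μ := by
    by_contra hcon
    exact hne (integral_undef hcon)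
  have hPint' : Integrable (fun x => P x + 1) μ := by
    have h2 := hCint.re
    refine h2.congr (Filter.Eventually.of_forall fun x => ?_)
    simp
  have hPint : Integrable P μ := by
    have := hPint'.sub (integrable_const (1:ℝ))
    refine this.congr (Filter.Eventually.of_forall fun x => ?_)
    simp
  refine ⟨hPint, ?_⟩
  rw [hio (fun x => G x + 1), hio (fun x => P x + 1)] at heq2
  have heqR : ∫ x, (G x + 1) ∂μ = ∫ x, (P x + 1) ∂μ := by exact_mod_cast heq2
  rw [integral_add hGint (integrable_const 1), integral_add hPint (integrable_const 1)] at heqR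
  show ∫ x, P x ∂μ = ∫ x, G x ∂μ
  linarith

private lemma sm_key2 (r : X → X)
    (hfib : ∀ x : X, (r ⁻¹' {x}).Finite ∧ (r ⁻¹' {x}).Nonempty)
    (μ : Measure X) [IsProbabilityMeasure μ]
    (hstrong : ∀ f : X → ℂ, Measurable f → (∃ C, ∀ x, ‖f x‖ ≤ C) →
      ∫ x, f x ∂μ
        = ∫ x, (Nat.card (r ⁻¹' {x}) : ℂ)⁻¹ * ∑' y : r ⁻¹' {x}, f ↑y ∂μ)
    (G : X → ℝ≥0∞) (hGmeas : Measurable G) :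
    AEMeasurable (fun x => (Nat.card (r ⁻¹' {x}) : ℝ≥0∞)⁻¹ * ∑' y : r ⁻¹' {x}, G ↑y) μ ∧
      ∫⁻ x, (Nat.card (r ⁻¹' {x}) : ℝ≥0∞)⁻¹ * ∑' y : r ⁻¹' {x}, G ↑y ∂μ = ∫⁻ x, G x ∂μ := by
  set g : ℕ → X → ℝ := fun k x => (min (G x) k).toReal with hg
  have hgmeas : ∀ k, Measurable (g k) :=
    fun k => ENNReal.measurable_toReal.comp (hGmeas.min measurable_const)
  have hg0 : ∀ k x, 0 ≤ g k x := fun k x => ENNReal.toReal_nonneg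
  have hmintop : ∀ (k : ℕ) (x : X), min (G x) (k : ℝ≥0∞) ≠ ⊤ :=
    fun k x => ne_top_of_le_ne_top (by simp) (min_le_right _ _)
  have hgc : ∀ k x, g k x ≤ k := fun k x => by
    have h1 : (min (G x) (k:ℝ≥0∞)).toReal ≤ ((k:ℝ≥0∞)).toReal :=
      ENNReal.toReal_mono (by simp) (min_le_right _ _)
    simpa using h1
  have hofg : ∀ k x, ENNReal.ofReal (g k x) = min (G x) k :=
    fun k x => ENNReal.ofReal_toReal (hmintop k x)
  have hkey1 := fun k => sm_key1 r hfib μ hstrong (g k) (hgmeas k) (hg0 k) k (hgc k)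
  set P : ℕ → X → ℝ :=
    fun k x => (Nat.card (r ⁻¹' {x}) : ℝ)⁻¹ * ∑' y : r ⁻¹' {x}, g k ↑y with hPdef
  set E : ℕ → X → ℝ≥0∞ :=
    fun k x => (Nat.card (r ⁻¹' {x}) : ℝ≥0∞)⁻¹ * ∑' y : r ⁻¹' {x}, min (G ↑y) k with hEdef
  have hP0 : ∀ k x, 0 ≤ P k x := fun k x =>
    mul_nonneg (by positivity) (tsum_nonneg fun y => hg0 k ↑y)
  have hEP : ∀ k x, ENNReal.ofReal (P k x) = E k x := by
    intro k x
    haveI := (hfib x).1.fintype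
    rw [hPdef, hEdef]
    simp only
    rw [tsum_fintype, tsum_fintype]
    rw [ENNReal.ofReal_mul (by positivity)]
    congr 1
    · rw [ENNReal.ofReal_inv_of_pos (by exact_mod_cast sm_npos r hfib x),
        ENNReal.ofReal_natCast]
    · rw [ENNReal.ofReal_sum_of_nonneg (fun (i : ↥(r ⁻¹' {x})) _ => hg0 k ↑i)]
      exact Finset.sum_congr rfl fun y _ => hofg k ↑y
  have hgint : ∀ k, Integrable (g k) μ := fun k =>
    (memLp_top_of_bound (hgmeas k).aestronglyMeasurable k
      (Filter.Eventually.of_forall fun x => by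
        rw [Real.norm_eq_abs, abs_of_nonneg (hg0 k x)]; exact hgc k x)).integrable le_top
  have hEmeas : ∀ k, AEMeasurable (E k) μ := by
    intro k
    have h1 : AEMeasurable (P k) μ := (hkey1 k).1.aemeasurable
    exact (ENNReal.measurable_ofReal.comp_aemeasurable h1).congr
      (Filter.Eventually.of_forall fun x => hEP k x)
  have hlk : ∀ k, ∫⁻ x, E k x ∂μ = ∫⁻ x, min (G x) k ∂μ := by
    intro k
    have h1 : ∫⁻ x, E k x ∂μ = ∫⁻ x, ENNReal.ofReal (P k x) ∂μ :=
      lintegral_congr fun x => (hEP k x).symm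
    rw [h1, ← ofReal_integral_eq_lintegral_ofReal (hkey1 k).1
        (Filter.Eventually.of_forall (hP0 k)), (hkey1 k).2,
      ofReal_integral_eq_lintegral_ofReal (hgint k)
        (Filter.Eventually.of_forall (hg0 k))]
    exact lintegral_congr fun x => hofg k x
  have hmono : ∀ x : X, Monotone fun k : ℕ => min (G x) (k:ℝ≥0∞) :=
    fun x k l hkl => min_le_min le_rfl (by exact_mod_cast Nat.cast_le.mpr hkl)
  have hGsup : ∀ x : X, (⨆ k : ℕ, min (G x) (k:ℝ≥0∞)) = G x := by
    intro x
    apply le_antisymm (iSup_le fun k => min_le_left _ _)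
    rcases eq_or_ne (G x) ⊤ with hx | hx
    · rw [hx]
      have h2 : ∀ k : ℕ, min (⊤:ℝ≥0∞) (k:ℝ≥0∞) = (k:ℝ≥0∞) := fun k => min_eq_right le_top
      simp only [h2]
      exact le_of_eq (ENNReal.iSup_natCast).symm
    · obtain ⟨k, hk⟩ := ENNReal.exists_nat_gt hx
      exact le_trans (le_of_eq (min_eq_left hk.le).symm)
        (le_iSup (fun k : ℕ => min (G x) (k:ℝ≥0∞)) k)
  have hEsup : ∀ x : X, (⨆ k : ℕ, E k x)
      = (Nat.card (r ⁻¹' {x}) : ℝ≥0∞)⁻¹ * ∑' y : r ⁻¹' {x}, G ↑y := by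
    intro x
    haveI := (hfib x).1.fintype
    rw [hEdef]
    simp only
    rw [← ENNReal.mul_iSup]
    congr 1
    simp only [tsum_fintype]
    rw [← ENNReal.finsetSum_iSup_of_monotone (fun (y : ↥(r ⁻¹' {x})) => hmono ↑y)]
    exact Finset.sum_congr rfl fun y _ => hGsup ↑y
  constructor
  · refine (AEMeasurable.iSup hEmeas).congr ?_
    exact Filter.Eventually.of_forall fun x => hEsup x
  · have hEmono : ∀ᵐ x ∂μ, Monotone fun k : ℕ => E k x := by
      refine Filter.Eventually.of_forall fun x k l hkl => ?_
      show E k x ≤ E l x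
      rw [hEdef]
      exact mul_le_mul_right (Summable.tsum_le_tsum (fun (y : ↥(r ⁻¹' {x})) => hmono ↑y hkl)
        ENNReal.summable ENNReal.summable) _
    have h2 : ∫⁻ x, (Nat.card (r ⁻¹' {x}) : ℝ≥0∞)⁻¹ * ∑' y : r ⁻¹' {x}, G ↑y ∂μ
        = ⨆ k, ∫⁻ x, E k x ∂μ := by
      rw [← lintegral_iSup' hEmeas hEmono]
      exact lintegral_congr fun x => (hEsup x).symm
    have h3 : ∫⁻ x, G x ∂μ = ⨆ k : ℕ, ∫⁻ x, min (G x) (k:ℝ≥0∞) ∂μ := by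
      calc ∫⁻ x, G x ∂μ = ∫⁻ x, ⨆ k : ℕ, min (G x) (k:ℝ≥0∞) ∂μ :=
            lintegral_congr fun x => (hGsup x).symm
        _ = ⨆ k : ℕ, ∫⁻ x, min (G x) (k:ℝ≥0∞) ∂μ :=
            lintegral_iSup (fun k => hGmeas.min measurable_const)
              (fun k l hkl x => hmono x hkl)
    rw [h2, h3]
    exact iSup_congr hlk

private lemma sm_key3 (r : X → X) (G φ : X → ℝ≥0∞) (x : X) :
    (Nat.card (r ⁻¹' {x}) : ℝ≥0∞)⁻¹ * ∑' y : r ⁻¹' {x}, (G ↑y * φ (r ↑y))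
      = φ x * ((Nat.card (r ⁻¹' {x}) : ℝ≥0∞)⁻¹ * ∑' y : r ⁻¹' {x}, G ↑y) := by
  have h1 : ∀ y : r ⁻¹' {x}, G ↑y * φ (r ↑y) = G ↑y * φ x := fun y => by
    rw [show r ↑y = x from y.2]
  rw [tsum_congr h1, ENNReal.tsum_mul_right]
  ring

private lemma sm_key4 (r : X → X) (hr_meas : Measurable r)
    (hfib : ∀ x : X, (r ⁻¹' {x}).Finite ∧ (r ⁻¹' {x}).Nonempty)
    (μ : Measure X) [IsProbabilityMeasure μ]
    (hstrong : ∀ f : X → ℂ, Measurable f → (∃ C, ∀ x, ‖f x‖ ≤ C) →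
      ∫ x, f x ∂μ
        = ∫ x, (Nat.card (r ⁻¹' {x}) : ℂ)⁻¹ * ∑' y : r ⁻¹' {x}, f ↑y ∂μ)
    (G φ : X → ℝ≥0∞) (hG : Measurable G) (hφ : Measurable φ) :
    ∫⁻ x, G x * φ (r x) ∂μ
      = ∫⁻ x, φ x * ((Nat.card (r ⁻¹' {x}) : ℝ≥0∞)⁻¹ * ∑' y : r ⁻¹' {x}, G ↑y) ∂μ := by
  have h1 := (sm_key2 r hfib μ hstrong (fun x => G x * φ (r x))
    (hG.mul (hφ.comp hr_meas))).2
  rw [← h1]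
  exact lintegral_congr fun x => sm_key3 r G φ x

end SmAux

open ENNReal in
/-- **Isometry criterion for the filtered composition operator `S_{m₀}`.**
Let `X` be a compact metric space with Borel σ-algebra, `r : X → X` a measurable
surjection with finite nonempty fibers, `μ` a strongly invariant Borel probability
measure, `m₀ ∈ L^∞(X, μ)` and `h ≥ 0` measurable with `h ∈ L¹(X, μ)`.  Then
`(S_{m₀} f)(x) = m₀(x) f(r(x))` is an isometry on `L²(X, h dμ)`, i.e.
`∫ |m₀(x)|² |f(r(x))|² h(x) dμ(x) = ∫ |f|² h dμ` for all `f ∈ L²(X, h dμ)`,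
if and only if `R_{m₀} h = h` μ-a.e., where `R_{m₀} = R_W` with weight
`W(x) = |m₀(x)|² / #r⁻¹(r(x))`. -/
theorem Smzero_isometry_iff_transfer_eigenfunction
    {X : Type} [MetricSpace X] [CompactSpace X] [MeasurableSpace X] [BorelSpace X]
    (r : X → X) (hr_meas : Measurable r) (hr_surj : Function.Surjective r)
    (hfib : ∀ x : X, (r ⁻¹' {x}).Finite ∧ (r ⁻¹' {x}).Nonempty)
    (μ : Measure X) [IsProbabilityMeasure μ]
    (hstrong : ∀ f : X → ℂ, Measurable f → (∃ C, ∀ x, ‖f x‖ ≤ C) →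
      ∫ x, f x ∂μ
        = ∫ x, (Nat.card (r ⁻¹' {x}) : ℂ)⁻¹ * ∑' y : r ⁻¹' {x}, f ↑y ∂μ)
    (m₀ : X → ℂ) (hm₀_meas : Measurable m₀) (hm₀_bdd : ∃ C, ∀ᵐ x ∂μ, ‖m₀ x‖ ≤ C)
    (h : X → ℝ) (hh_meas : Measurable h) (hh_nonneg : ∀ x, 0 ≤ h x)
    (hh_int : Integrable h μ) :
    (∀ f : X → ℂ,
        MemLp f 2 (μ.withDensity fun x => ENNReal.ofReal (h x)) →
        ∫ x, ‖m₀ x‖ ^ 2 * ‖f (r x)‖ ^ 2 * h x ∂μ = ∫ x, ‖f x‖ ^ 2 * h x ∂μ)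
      ↔ (∀ᵐ x ∂μ,
          (∑' y : r ⁻¹' {x},
            ‖m₀ (y : X)‖ ^ 2 / (Nat.card (r ⁻¹' {r (y : X)}) : ℝ) * h (y : X)) = h x) := by
  set H : X → ℝ≥0∞ := fun x => ENNReal.ofReal (h x) with hH
  set ν : Measure X := μ.withDensity H with hν
  have hHmeas : Measurable H := ENNReal.measurable_ofReal.comp hh_meas
  have hHfin : ∫⁻ x, H x ∂μ ≠ ⊤ := hh_int.lintegral_lt_top.ne
  haveI : IsFiniteMeasure ν := isFiniteMeasure_withDensity hHfin
  set g : X → ℝ≥0∞ := fun x => ENNReal.ofReal (‖m₀ x‖ ^ 2 * h x) with hg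
  have hgmeas : Measurable g :=
    ENNReal.measurable_ofReal.comp ((hm₀_meas.norm.pow_const 2).mul hh_meas)
  set Eg : X → ℝ≥0∞ :=
    fun x => (Nat.card (r ⁻¹' {x}) : ℝ≥0∞)⁻¹ * ∑' y : r ⁻¹' {x}, g ↑y with hEg
  obtain ⟨hEgmeas, hEgint⟩ := sm_key2 r hfib μ hstrong g hgmeas
  have hgfin : ∫⁻ x, g x ∂μ ≠ ⊤ := by
    obtain ⟨C, hC⟩ := hm₀_bdd
    have hb : ∀ᵐ x ∂μ, g x ≤ ENNReal.ofReal ((max C 0) ^ 2) * H x := by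
      filter_upwards [hC] with x hx
      rw [hg, hH]
      simp only
      rw [← ENNReal.ofReal_mul (by positivity)]
      apply ENNReal.ofReal_le_ofReal
      have h1 : ‖m₀ x‖ ^ 2 ≤ (max C 0) ^ 2 :=
        pow_le_pow_left₀ (norm_nonneg _) (le_max_of_le_left hx) 2
      nlinarith [hh_nonneg x, norm_nonneg (m₀ x)]
    have h2 : ∫⁻ x, g x ∂μ ≤ ENNReal.ofReal ((max C 0) ^ 2) * ∫⁻ x, H x ∂μ := by
      refine le_trans (lintegral_mono_ae hb) (le_of_eq ?_)
      exact lintegral_const_mul' _ _ ENNReal.ofReal_ne_top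
    exact (lt_of_le_of_lt h2 (ENNReal.mul_lt_top ENNReal.ofReal_lt_top hHfin.lt_top)).ne
  have hEgfin : ∫⁻ x, Eg x ∂μ ≠ ⊤ := by rw [hEgint]; exact hgfin
  -- pointwise identification of the transfer sum
  have hT0 : ∀ x : X, 0 ≤ ∑' y : r ⁻¹' {x},
      ‖m₀ (y : X)‖ ^ 2 / (Nat.card (r ⁻¹' {r (y : X)}) : ℝ) * h (y : X) := fun x =>
    tsum_nonneg fun y => mul_nonneg (div_nonneg (by positivity) (Nat.cast_nonneg _))
      (hh_nonneg _)
  have hTE : ∀ x : X, ENNReal.ofReal (∑' y : r ⁻¹' {x},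
      ‖m₀ (y : X)‖ ^ 2 / (Nat.card (r ⁻¹' {r (y : X)}) : ℝ) * h (y : X)) = Eg x := by
    intro x
    haveI := (hfib x).1.fintype
    have hterm : ∀ y : r ⁻¹' {x},
        ‖m₀ (y : X)‖ ^ 2 / (Nat.card (r ⁻¹' {r (y : X)}) : ℝ) * h (y : X)
          = (Nat.card (r ⁻¹' {x}) : ℝ)⁻¹ * (‖m₀ (y : X)‖ ^ 2 * h (y : X)) := by
      intro y
      rw [show r (y : X) = x from y.2]
      rw [div_eq_mul_inv]
      ring
    rw [tsum_congr hterm, hEg, hg]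
    simp only
    rw [tsum_fintype, tsum_fintype, ← Finset.mul_sum]
    rw [ENNReal.ofReal_mul (by positivity)]
    congr 1
    · rw [ENNReal.ofReal_inv_of_pos (by exact_mod_cast sm_npos r hfib x),
        ENNReal.ofReal_natCast]
    · rw [ENNReal.ofReal_sum_of_nonneg (fun (i : ↥(r ⁻¹' {x})) _ =>
        mul_nonneg (by positivity) (hh_nonneg _))]
  constructor
  · -- isometry → eigenfunction
    intro Hiso
    have hEH : Eg =ᵐ[μ] H := by
      refine ae_eq_of_forall_setLIntegral_eq_of_sigmaFinite₀ hEgmeas hHmeas.aemeasurable ?_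
      intro s hs _
      set f : X → ℂ := s.indicator fun _ => 1 with hfdef
      have hfmeas : Measurable f := measurable_const.indicator hs
      have hfmem : MemLp f 2 ν := by
        refine MemLp.mono_exponent ?_ le_top
        refine memLp_top_of_bound hfmeas.aestronglyMeasurable 1
          (Filter.Eventually.of_forall fun x => ?_)
        rw [hfdef]
        by_cases hx : x ∈ s <;> simp [Set.indicator_apply, hx]
      have hiso := Hiso f hfmem
      set φ : X → ℝ≥0∞ := s.indicator fun _ => 1 with hφdef
      have hφmeas : Measurable φ := measurable_const.indicator hs
      have hL : ∫ x, ‖m₀ x‖ ^ 2 * ‖f (r x)‖ ^ 2 * h x ∂μ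
          = (∫⁻ x, g x * φ (r x) ∂μ).toReal := by
        have hsm1 : AEStronglyMeasurable (fun x => ‖m₀ x‖ ^ 2 * ‖f (r x)‖ ^ 2 * h x) μ := by
          exact (((hm₀_meas.norm.pow_const 2).mul
            ((hfmeas.comp hr_meas).norm.pow_const 2)).mul hh_meas).aestronglyMeasurable
        rw [integral_eq_lintegral_of_nonneg_ae
          (Filter.Eventually.of_forall fun x =>
            mul_nonneg (by positivity) (hh_nonneg x)) hsm1]
        congr 1
        refine lintegral_congr fun x => ?_
        rw [hfdef, hφdef, hg]
        by_cases hx : r x ∈ s <;>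
          simp [Set.indicator_apply, hx, mul_comm, mul_assoc, mul_left_comm]
      have hR : ∫ x, ‖f x‖ ^ 2 * h x ∂μ = (∫⁻ x in s, H x ∂μ).toReal := by
        have hsm2 : AEStronglyMeasurable (fun x => ‖f x‖ ^ 2 * h x) μ := by
          exact ((hfmeas.norm.pow_const 2).mul hh_meas).aestronglyMeasurable
        rw [integral_eq_lintegral_of_nonneg_ae
          (Filter.Eventually.of_forall fun x => mul_nonneg (by positivity) (hh_nonneg x)) hsm2]
        rw [← lintegral_indicator hs]
        congr 1
        refine lintegral_congr fun x => ?_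
        rw [hfdef, hH]
        by_cases hx : x ∈ s <;> simp [Set.indicator_apply, hx]
      have hkey := sm_key4 r hr_meas hfib μ hstrong g φ hgmeas hφmeas
      have hind : ∫⁻ x, φ x * Eg x ∂μ = ∫⁻ x in s, Eg x ∂μ := by
        rw [← lintegral_indicator hs]
        refine lintegral_congr fun x => ?_
        rw [hφdef]
        by_cases hx : x ∈ s <;> simp [Set.indicator_apply, hx]
      rw [hL, hR, hkey, hind] at hiso
      refine (ENNReal.toReal_eq_toReal_iff' ?_ ?_).mp hiso
      · exact (lt_of_le_of_lt (setLIntegral_le_lintegral s Eg) hEgfin.lt_top).ne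
      · exact (lt_of_le_of_lt (setLIntegral_le_lintegral s H) hHfin.lt_top).ne
    filter_upwards [hEH] with x hx
    refine (ENNReal.ofReal_eq_ofReal_iff (hT0 x) (hh_nonneg x)).mp ?_
    rw [hTE x, hx]
  · -- eigenfunction → isometry
    intro Hae f hfmem
    have hEH : Eg =ᵐ[μ] H := by
      filter_upwards [Hae] with x hx
      rw [← hTE x, hx]
    have hf1 : AEStronglyMeasurable f ν := hfmem.1
    set f' : X → ℂ := hf1.mk f with hf'def
    have hf'meas : Measurable f' := hf1.stronglyMeasurable_mk.measurable
    have hff' : f =ᵐ[ν] f' := hf1.ae_eq_mk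
    obtain ⟨N', hNN', hN'meas, hN'0⟩ := exists_measurable_superset_of_null (ae_iff.mp hff')
    have hνN' : ∫⁻ x in N', H x ∂μ = 0 := by
      rw [← withDensity_apply _ hN'meas]
      exact hN'0
    have hhN' : ∀ᵐ x ∂μ, x ∈ N' → h x = 0 := by
      have h0 : (fun x => H x) =ᵐ[μ.restrict N'] 0 :=
        (lintegral_eq_zero_iff' hHmeas.aemeasurable.restrict).mp hνN'
      filter_upwards [(ae_restrict_iff' hN'meas).mp h0] with x hx hxN
      have h1 := hx hxN
      simp only [Pi.zero_apply, hH] at h1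
      exact le_antisymm (ENNReal.ofReal_eq_zero.mp h1) (hh_nonneg x)
    set φN : X → ℝ≥0∞ := N'.indicator fun _ => 1 with hφN
    have hφNmeas : Measurable φN := measurable_const.indicator hN'meas
    have hgN : ∫⁻ x in r ⁻¹' N', g x ∂μ = 0 := by
      have h1 := sm_key4 r hr_meas hfib μ hstrong g φN hgmeas hφNmeas
      have h2 : ∫⁻ x, φN x * Eg x ∂μ = ∫⁻ x, φN x * H x ∂μ :=
        lintegral_congr_ae (by filter_upwards [hEH] with x hx; show φN x * Eg x = φN x * H x; rw [hx])
      have h3 : ∫⁻ x, φN x * H x ∂μ = ∫⁻ x in N', H x ∂μ := by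
        rw [← lintegral_indicator hN'meas]
        refine lintegral_congr fun x => ?_
        rw [hφN]
        by_cases hx : x ∈ N' <;> simp [Set.indicator_apply, hx]
      have h4 : ∫⁻ x in r ⁻¹' N', g x ∂μ = ∫⁻ x, g x * φN (r x) ∂μ := by
        rw [← lintegral_indicator (hr_meas hN'meas)]
        refine lintegral_congr fun x => ?_
        rw [hφN]
        by_cases hx : r x ∈ N' <;> simp [Set.indicator_apply, Set.mem_preimage, hx]
      rw [h4, h1, h2, h3, hνN']
    have hg0N : ∀ᵐ x ∂μ, x ∈ r ⁻¹' N' → ‖m₀ x‖ ^ 2 * h x = 0 := by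
      have h0 : (fun x => g x) =ᵐ[μ.restrict (r ⁻¹' N')] 0 :=
        (lintegral_eq_zero_iff' hgmeas.aemeasurable.restrict).mp hgN
      filter_upwards [(ae_restrict_iff' (hr_meas hN'meas)).mp h0] with x hx hxN
      have h1 := hx hxN
      simp only [Pi.zero_apply, hg] at h1
      exact le_antisymm (ENNReal.ofReal_eq_zero.mp h1)
        (mul_nonneg (by positivity) (hh_nonneg x))
    have e1 : (fun x => ‖f x‖ ^ 2 * h x) =ᵐ[μ] fun x => ‖f' x‖ ^ 2 * h x := by
      filter_upwards [hhN'] with x hx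
      by_cases hxN : x ∈ N'
      · rw [hx hxN]; ring
      · have hfx : f x = f' x := by
          by_contra hne
          exact hxN (hNN' hne)
        rw [hfx]
    have e2 : (fun x => ‖m₀ x‖ ^ 2 * ‖f (r x)‖ ^ 2 * h x)
        =ᵐ[μ] fun x => ‖m₀ x‖ ^ 2 * ‖f' (r x)‖ ^ 2 * h x := by
      filter_upwards [hg0N] with x hx
      by_cases hxN : r x ∈ N'
      · have h0 : ‖m₀ x‖ ^ 2 * h x = 0 := hx hxN
        have hre : ∀ t : ℝ, ‖m₀ x‖ ^ 2 * t * h x = t * (‖m₀ x‖ ^ 2 * h x) := by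
          intro t; ring
        rw [hre, hre, h0, mul_zero, mul_zero]
      · have hfx : f (r x) = f' (r x) := by
          by_contra hne
          exact hxN (hNN' hne)
        rw [hfx]
    set Φ : X → ℝ≥0∞ := fun x => ENNReal.ofReal (‖f' x‖ ^ 2) with hΦ
    have hΦmeas : Measurable Φ :=
      ENNReal.measurable_ofReal.comp (hf'meas.norm.pow_const 2)
    have hL2 : ∫ x, ‖m₀ x‖ ^ 2 * ‖f' (r x)‖ ^ 2 * h x ∂μ
        = (∫⁻ x, g x * Φ (r x) ∂μ).toReal := by
      have hsm3 : AEStronglyMeasurable (fun x => ‖m₀ x‖ ^ 2 * ‖f' (r x)‖ ^ 2 * h x) μ := by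
        exact (((hm₀_meas.norm.pow_const 2).mul
          ((hf'meas.comp hr_meas).norm.pow_const 2)).mul hh_meas).aestronglyMeasurable
      rw [integral_eq_lintegral_of_nonneg_ae
        (Filter.Eventually.of_forall fun x => mul_nonneg (by positivity) (hh_nonneg x)) hsm3]
      congr 1
      refine lintegral_congr fun x => ?_
      rw [hg, hΦ]
      simp only
      rw [← ENNReal.ofReal_mul (mul_nonneg (by positivity) (hh_nonneg x))]
      congr 1
      ring
    have hR2 : ∫ x, ‖f' x‖ ^ 2 * h x ∂μ
        = (∫⁻ x, Φ x * H x ∂μ).toReal := by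
      have hsm4 : AEStronglyMeasurable (fun x => ‖f' x‖ ^ 2 * h x) μ := by
        exact ((hf'meas.norm.pow_const 2).mul hh_meas).aestronglyMeasurable
      rw [integral_eq_lintegral_of_nonneg_ae
        (Filter.Eventually.of_forall fun x => mul_nonneg (by positivity) (hh_nonneg x)) hsm4]
      congr 1
      refine lintegral_congr fun x => ?_
      rw [hΦ, hH]
      simp only
      rw [← ENNReal.ofReal_mul (by positivity)]
    have hmid : ∫⁻ x, g x * Φ (r x) ∂μ = ∫⁻ x, Φ x * H x ∂μ := by
      rw [sm_key4 r hr_meas hfib μ hstrong g Φ hgmeas hΦmeas]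
      exact lintegral_congr_ae (by
        filter_upwards [hEH] with x hx
        show Φ x * Eg x = Φ x * H x
        rw [hx])
    calc ∫ x, ‖m₀ x‖ ^ 2 * ‖f (r x)‖ ^ 2 * h x ∂μ
        = ∫ x, ‖m₀ x‖ ^ 2 * ‖f' (r x)‖ ^ 2 * h x ∂μ := integral_congr_ae e2
      _ = (∫⁻ x, g x * Φ (r x) ∂μ).toReal := hL2
      _ = (∫⁻ x, Φ x * H x ∂μ).toReal := by rw [hmid]
      _ = ∫ x, ‖f' x‖ ^ 2 * h x ∂μ := hR2.symm
      _ = ∫ x, ‖f x‖ ^ 2 * h x ∂μ := (integral_congr_ae e1).symm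
end

section
/- Fix an integer N ≥ 2. Then the Lebesgue measure restricted to [0,1) is the unique Borel probability measure μ on [0,1) satisfying the strong invariance identity (1/N) ∫_{[0,1)} Σ_{k=0}^{N-1} f((x+k)/N) dμ(x) = ∫_{[0,1)} f dμ for every bounded measurable f : [0,1) → ℂ. -/
open MeasureTheory

/-!
Strong invariance says that `μ` is a fixed point of the transfer
`μ ↦ N⁻¹ ∑ₖ μ.map (branchMap N k)`. For `a ∈ [0,1)` write `N a = m + u` with `m = ⌊N a⌋` and
`u = Int.fract (N a)`: the branch `x ↦ (x + k)/N` lands in `[0, a]` for every `x` when `k < m`,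
for no `x` when `k > m`, and exactly for `x ≤ u` when `k = m`. So with `F_μ a = μ [0, a]`, the
transfer of `μ` has distribution function `a ↦ (m + F_μ u) / N`. Lebesgue measure (`F a = a`) is
therefore a fixed point, and the difference `D` of the distribution functions of two fixed probability measures
satisfies `D a = D (N a mod 1) / N`; being bounded, `D` vanishes.
-/

/-- The `k`-th inverse branch `x ↦ (x + k)/N` of `x ↦ N·x mod 1` on `[0,1)`
(for `k < N` the value `(x+k)/N` already lies in `[0,1)`, so taking the fractional
part does not change it). -/
noncomputable def branchMap (N k : ℕ) (x : Set.Ico (0:ℝ) 1) : Set.Ico (0:ℝ) 1 :=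
  ⟨Int.fract (((x : ℝ) + k) / N), Int.fract_nonneg _, Int.fract_lt_one _⟩

/-- Lebesgue measure restricted to `[0,1)`, as a Borel measure on `[0,1)`. -/
noncomputable def lebesgueIco : Measure (Set.Ico (0:ℝ) 1) :=
  Measure.comap Subtype.val volume

open Set
open scoped NNReal

local notation "I" => Set.Ico (0:ℝ) 1

lemma coe_branchMap {N k : ℕ} (hk : k < N) (x : I) : (branchMap N k x : ℝ) = (x + k) / N := by
  have hN : (0:ℝ) < N := by exact_mod_cast Nat.zero_lt_of_lt hk
  refine Int.fract_eq_self.mpr ⟨by have := x.2.1; positivity, ?_⟩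
  rw [div_lt_one hN]
  have : (k:ℝ) + 1 ≤ N := by exact_mod_cast hk
  linarith [x.2.2]

lemma measurable_branchMap (N k : ℕ) : Measurable (branchMap N k) :=
  (measurable_fract.comp (by fun_prop)).subtype_mk

noncomputable def expandMap (N : ℕ) (x : I) : I :=
  ⟨Int.fract (N * x), Int.fract_nonneg _, Int.fract_lt_one _⟩

lemma mul_eq_floor_add_expandMap (N : ℕ) (a : I) :
    (N : ℝ) * a = ⌊(N : ℝ) * a⌋₊ + expandMap N a := by
  rw [natCast_floor_eq_intCast_floor (by have := a.2.1; positivity)]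
  exact (Int.floor_add_fract _).symm

lemma floor_mul_lt_self {N : ℕ} (hN : 0 < N) (a : I) : ⌊(N : ℝ) * a⌋₊ < N := by
  rw [Nat.floor_lt (by have := a.2.1; positivity)]
  exact mul_lt_of_lt_one_right (by exact_mod_cast hN) a.2.2

lemma branchMap_le_iff {N k : ℕ} (hk : k < N) (x a : I) :
    branchMap N k x ≤ a ↔ (x : ℝ) + k ≤ ⌊(N : ℝ) * a⌋₊ + expandMap N a := by
  rw [← Subtype.coe_le_coe, coe_branchMap hk,
    div_le_iff₀' (by exact_mod_cast Nat.zero_lt_of_lt hk), ← mul_eq_floor_add_expandMap]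

lemma preimage_Iic_branchMap_of_lt {N k : ℕ} {a : I} (hk : k < ⌊(N : ℝ) * a⌋₊) (hkN : k < N) :
    branchMap N k ⁻¹' Iic a = univ := by
  refine eq_univ_of_forall fun x => (branchMap_le_iff hkN x a).mpr ?_
  have : (k : ℝ) + 1 ≤ ⌊(N : ℝ) * a⌋₊ := by exact_mod_cast hk
  linarith [x.2.2, (expandMap N a).2.1]

lemma preimage_Iic_branchMap_floor {N : ℕ} (hN : 0 < N) (a : I) :
    branchMap N ⌊(N : ℝ) * a⌋₊ ⁻¹' Iic a = Iic (expandMap N a) := by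
  ext x
  simp only [mem_preimage, mem_Iic, branchMap_le_iff (floor_mul_lt_self hN a), add_comm (x : ℝ),
    add_le_add_iff_left, Subtype.coe_le_coe]

lemma preimage_Iic_branchMap_of_gt {N k : ℕ} {a : I} (hk : ⌊(N : ℝ) * a⌋₊ < k) (hkN : k < N) :
    branchMap N k ⁻¹' Iic a = ∅ := by
  refine eq_empty_of_forall_notMem fun x hx => ?_
  have := (branchMap_le_iff hkN x a).mp hx
  have : (⌊(N : ℝ) * a⌋₊ : ℝ) + 1 ≤ k := by exact_mod_cast hk
  linarith [x.2.1, (expandMap N a).2.2]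

noncomputable def transferMeasure (N : ℕ) (μ : Measure I) : Measure I :=
  (N : ℝ≥0)⁻¹ • ∑ k ∈ Finset.range N, μ.map (branchMap N k)

instance isFiniteMeasure_transferMeasure (N : ℕ) (μ : Measure I) [IsFiniteMeasure μ] :
    IsFiniteMeasure (transferMeasure N μ) := by
  unfold transferMeasure; infer_instance

lemma transferMeasure_apply (N : ℕ) (μ : Measure I) {s : Set I} (hs : MeasurableSet s) :
    transferMeasure N μ s = (N : ℝ≥0)⁻¹ • ∑ k ∈ Finset.range N, μ (branchMap N k ⁻¹' s) := by
  simp [transferMeasure, Measure.finsetSum_apply, Measure.map_apply (measurable_branchMap N _) hs]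

lemma transferMeasure_Iic {N : ℕ} (hN : 0 < N) (μ : Measure I) [IsProbabilityMeasure μ] (a : I) :
    (transferMeasure N μ).real (Iic a) = (⌊(N : ℝ) * a⌋₊ + μ.real (Iic (expandMap N a))) / N := by
  set m := ⌊(N : ℝ) * a⌋₊
  have hm : m < N := floor_mul_lt_self hN a
  have hbelow : ∑ k ∈ Finset.range m, μ (branchMap N k ⁻¹' Iic a) = m := by
    rw [Finset.sum_congr rfl fun k hk =>
      by rw [preimage_Iic_branchMap_of_lt (Finset.mem_range.mp hk) (by grind)]]
    simp
  have habove : ∑ k ∈ Finset.Ico (m + 1) N, μ (branchMap N k ⁻¹' Iic a) = 0 :=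
    Finset.sum_eq_zero fun k hk => by
      rw [preimage_Iic_branchMap_of_gt (by grind) (Finset.mem_Ico.mp hk).2, measure_empty]
  have hsum : ∑ k ∈ Finset.range N, μ (branchMap N k ⁻¹' Iic a) = m + μ (Iic (expandMap N a)) := by
    rw [← Finset.sum_range_add_sum_Ico _ hm, Finset.sum_range_succ, hbelow, habove,
      preimage_Iic_branchMap_floor hN, add_zero]
  rw [measureReal_def, transferMeasure_apply N μ measurableSet_Iic, hsum, ENNReal.toReal_smul,
    ENNReal.toReal_add (by simp) (measure_ne_top _ _), NNReal.smul_def]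
  simp [measureReal_def, div_eq_inv_mul]

lemma integral_transferMeasure (N : ℕ) (μ : Measure I) [IsFiniteMeasure μ] {f : I → ℂ}
    (hf : Measurable f) {C : ℝ} (hC : ∀ x, ‖f x‖ ≤ C) :
    ∫ x, f x ∂transferMeasure N μ =
      (N : ℂ)⁻¹ * ∫ x, ∑ k ∈ Finset.range N, f (branchMap N k x) ∂μ := by
  have hint (ν : Measure I) [IsFiniteMeasure ν] : Integrable f ν :=
    .of_bound hf.aestronglyMeasurable C (.of_forall hC)
  rw [transferMeasure, integral_smul_nnreal_measure, integral_finsetSum_measure fun k _ => hint _,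
    integral_finsetSum (f := fun k x => f (branchMap N k x)) _
      fun k _ => (hint _).comp_measurable (measurable_branchMap N k)]
  simp [integral_map (measurable_branchMap N _).aemeasurable hf.aestronglyMeasurable,
    NNReal.smul_def, Complex.real_smul]

def StronglyInvariant (N : ℕ) (μ : Measure I) : Prop :=
  ∀ f : I → ℂ, Measurable f → (∃ C, ∀ x, ‖f x‖ ≤ C) →
    (N : ℂ)⁻¹ * ∫ x, ∑ k ∈ Finset.range N, f (branchMap N k x) ∂μ = ∫ x, f x ∂μ

lemma stronglyInvariant_iff_transferMeasure_eq (N : ℕ) (μ : Measure I) [IsFiniteMeasure μ] :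
    StronglyInvariant N μ ↔ transferMeasure N μ = μ := by
  constructor
  · intro hμ
    ext s hs
    have hind : Measurable (s.indicator fun _ => (1 : ℂ)) := measurable_const.indicator hs
    have hbound : ∀ x, ‖s.indicator (fun _ => (1 : ℂ)) x‖ ≤ 1 := fun x =>
      (norm_indicator_le_norm_self _ x).trans (by simp)
    have := (integral_transferMeasure N μ hind hbound).trans (hμ _ hind ⟨1, hbound⟩)
    rw [integral_indicator_const _ hs, integral_indicator_const _ hs] at this
    exact (measureReal_eq_measureReal_iff).mp (by simpa using this)
  · rintro hμ f hf ⟨C, hC⟩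
    rw [← integral_transferMeasure N μ hf hC, hμ]

lemma eq_zero_of_abs_le_mul_abs_comp {α : Type*} (T : α → α) {D : α → ℝ} {q C : ℝ}
    (hq₀ : 0 ≤ q) (hq₁ : q < 1) (hC : ∀ x, |D x| ≤ C) (hD : ∀ x, |D x| ≤ q * |D (T x)|) (x : α) :
    D x = 0 := by
  have hpow : ∀ n x, |D x| ≤ q ^ n * C := by
    intro n
    induction n with
    | zero => simpa using hC
    | succ n ih =>
      intro x
      calc |D x| ≤ q * |D (T x)| := hD x
        _ ≤ q * (q ^ n * C) := mul_le_mul_of_nonneg_left (ih (T x)) hq₀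
        _ = q ^ (n + 1) * C := by ring
  have hlim : Filter.Tendsto (fun n => q ^ n * C) Filter.atTop (nhds 0) := by
    simpa using (tendsto_pow_atTop_nhds_zero_of_lt_one hq₀ hq₁).mul_const C
  exact abs_nonpos_iff.mp (ge_of_tendsto' hlim fun n => hpow n x)

lemma eq_of_transferMeasure_eq {N : ℕ} (hN : 2 ≤ N) {μ ν : Measure I} [IsProbabilityMeasure μ]
    [IsProbabilityMeasure ν] (hμ : transferMeasure N μ = μ) (hν : transferMeasure N ν = ν) :
    μ = ν := by
  set D : I → ℝ := fun a => μ.real (Iic a) - ν.real (Iic a)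
  have hD : ∀ a, D a = D (expandMap N a) / N := by
    intro a
    simp only [D]
    nth_rw 1 [← hμ, ← hν]
    rw [transferMeasure_Iic (by omega), transferMeasure_Iic (by omega)]
    ring
  have hbound : ∀ a, |D a| ≤ 1 := fun a =>
    abs_sub_le_of_nonneg_of_le measureReal_nonneg measureReal_le_one measureReal_nonneg
      measureReal_le_one
  have hN' : (1 : ℝ) < N := by exact_mod_cast hN
  refine Measure.ext_of_Iic μ ν fun a => ?_
  have := eq_zero_of_abs_le_mul_abs_comp (expandMap N) (inv_nonneg.mpr (by positivity))
    (inv_lt_one_of_one_lt₀ hN') hbound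
    (fun a => by rw [hD a, abs_div, Nat.abs_cast, div_eq_inv_mul]) a
  rw [← measureReal_eq_measureReal_iff]
  exact sub_eq_zero.mp this

lemma lebesgueIco_apply (s : Set I) : lebesgueIco s = volume (Subtype.val '' s) :=
  (MeasurableEmbedding.subtype_coe measurableSet_Ico).comap_apply _ _

instance isProbabilityMeasure_lebesgueIco : IsProbabilityMeasure lebesgueIco :=
  ⟨by rw [lebesgueIco_apply, image_univ, Subtype.range_coe, Real.volume_Ico]; norm_num⟩

lemma lebesgueIco_real_Iic (a : I) : lebesgueIco.real (Iic a) = a := by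
  simp [measureReal_def, lebesgueIco_apply, image_subtype_val_Ico_Iic, a.2.1]

lemma transferMeasure_lebesgueIco {N : ℕ} (hN : 0 < N) :
    transferMeasure N lebesgueIco = lebesgueIco := by
  refine Measure.ext_of_Iic _ _ fun a => ?_
  rw [← measureReal_eq_measureReal_iff, transferMeasure_Iic hN, lebesgueIco_real_Iic,
    lebesgueIco_real_Iic, ← mul_eq_floor_add_expandMap]
  field_simp

/-- **Lebesgue measure is the unique strongly invariant probability measure for
`x ↦ Nx mod 1`.**  Fix an integer `N ≥ 2`.  Lebesgue measure restricted to `[0,1)` is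
the unique Borel probability measure `μ` on `[0,1)` satisfying
`(1/N) ∫ Σ_{k=0}^{N-1} f((x+k)/N) dμ(x) = ∫ f dμ` for every bounded measurable
`f : [0,1) → ℂ`. -/
theorem lebesgue_unique_strongly_invariant (N : ℕ) (hN : 2 ≤ N) :
    (IsProbabilityMeasure lebesgueIco ∧
      ∀ f : Set.Ico (0:ℝ) 1 → ℂ, Measurable f → (∃ C, ∀ x, ‖f x‖ ≤ C) →
        (N : ℂ)⁻¹ * ∫ x, ∑ k ∈ Finset.range N, f (branchMap N k x) ∂lebesgueIco
          = ∫ x, f x ∂lebesgueIco) ∧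
    ∀ μ : Measure (Set.Ico (0:ℝ) 1), IsProbabilityMeasure μ →
      (∀ f : Set.Ico (0:ℝ) 1 → ℂ, Measurable f → (∃ C, ∀ x, ‖f x‖ ≤ C) →
        (N : ℂ)⁻¹ * ∫ x, ∑ k ∈ Finset.range N, f (branchMap N k x) ∂μ
          = ∫ x, f x ∂μ) →
      μ = lebesgueIco := by
  have hlebesgue : transferMeasure N lebesgueIco = lebesgueIco :=
    transferMeasure_lebesgueIco (by omega)
  refine ⟨⟨inferInstance, (stronglyInvariant_iff_transferMeasure_eq N _).mpr hlebesgue⟩, ?_⟩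
  intro μ _ hμ
  exact eq_of_transferMeasure_eq hN
    ((stronglyInvariant_iff_transferMeasure_eq N μ).mp hμ) hlebesgue
end
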